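/- arXiv:2312.15024 — 2 statements merged into one kernel-verified Lean document; each statement's English description precedes it below -/
import Mathlib

section
/- Let $K_1 \geq 2$ and $K_2 \geq 2$ be integers with $K_1 > K_2$, and let $K = K_1 K_2$. Define $A = K_2^2 - \frac{K(K_2-1)}{\binom{K}{K_2}}$ (a rational number). Then $A - \frac{1}{K_1} > 0$ and $A - K < 0$, so $\frac{A-K}{A - 1/K_1} < 0$. -/
lemma choose_mono_left_aux {n a b : ℕ} (hab : a ≤ b) (hb : b ≤ n / 2) :
    n.choose a ≤ n.choose b := by
  induction b with
  | zero => simp [Nat.le_zero.mp hab]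
  | succ m ih =>
    rcases Nat.lt_or_ge a (m + 1) with h | h
    · exact le_trans (ih (Nat.lt_succ_iff.mp h)
        (le_trans (Nat.le_succ m) hb))
        (Nat.choose_le_succ_of_lt_half_left (Nat.lt_of_succ_le hb))
    · have : a = m + 1 := le_antisymm hab h
      simp [this]

theorem stmt3 (K₁ K₂ : ℕ) (h1 : 2 ≤ K₁) (h2 : 2 ≤ K₂) (hgt : K₁ > K₂)
    (K : ℕ) (hK : K = K₁ * K₂) (A : ℚ)
    (hA : A = (K₂ : ℚ) ^ 2 - (K : ℚ) * ((K₂ : ℚ) - 1) / (K.choose K₂ : ℚ)) :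
    A - 1 / (K₁ : ℚ) > 0 ∧ A - (K : ℚ) < 0 ∧
      (A - (K : ℚ)) / (A - 1 / (K₁ : ℚ)) < 0 := by
  have h1' : 3 ≤ K₁ := lt_of_le_of_lt h2 hgt
  have hK2K : K₂ ≤ K := by
    rw [hK]; calc K₂ = 1 * K₂ := (one_mul _).symm
      _ ≤ K₁ * K₂ := Nat.mul_le_mul_right _ (by omega)
  have hChalf : K₂ ≤ K / 2 := by
    rw [hK, Nat.le_div_iff_mul_le (by norm_num), mul_comm K₂ 2]
    exact Nat.mul_le_mul_right K₂ h1
  have hCpos : 0 < K.choose K₂ := Nat.choose_pos hK2K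
  -- key nat inequality : K * (K₂ - 1) < choose K K₂
  have hkey : K * (K₂ - 1) < K.choose K₂ := by
    have h2le : K.choose 2 ≤ K.choose K₂ := choose_mono_left_aux h2 hChalf
    have hC2 : 2 * K.choose 2 = K * (K - 1) := by
      rw [Nat.choose_two_right, Nat.mul_div_cancel' (Nat.even_mul_pred_self K).two_dvd]
    have hKge : 6 ≤ K := by rw [hK]; calc 6 = 3 * 2 := rfl
      _ ≤ K₁ * K₂ := Nat.mul_le_mul h1' h2
    have hlt : 2 * (K * (K₂ - 1)) < K * (K - 1) := by
      have : 2 * (K₂ - 1) < K - 1 := by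
        have : 2 * K₂ ≤ K := by
          rw [hK]; exact Nat.mul_le_mul_right K₂ h1
        omega
      calc 2 * (K * (K₂ - 1)) = K * (2 * (K₂ - 1)) := by ring
        _ < K * (K - 1) := Nat.mul_lt_mul_of_le_of_lt (le_refl _) this (by omega)
    omega
  -- rational facts
  have hCq : (0 : ℚ) < (K.choose K₂ : ℚ) := by exact_mod_cast hCpos
  have hKq : (0 : ℚ) < (K : ℚ) := by
    have : 0 < K := by omega
    exact_mod_cast this
  have hK2q : (2 : ℚ) ≤ (K₂ : ℚ) := by exact_mod_cast h2
  have ht0 : 0 ≤ (K : ℚ) * ((K₂ : ℚ) - 1) / (K.choose K₂ : ℚ) := by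
    apply div_nonneg _ (le_of_lt hCq)
    apply mul_nonneg (le_of_lt hKq); linarith
  have ht1 : (K : ℚ) * ((K₂ : ℚ) - 1) / (K.choose K₂ : ℚ) < 1 := by
    rw [div_lt_one hCq]
    have : ((K * (K₂ - 1) : ℕ) : ℚ) < ((K.choose K₂ : ℕ) : ℚ) := by exact_mod_cast hkey
    have hcast : ((K * (K₂ - 1) : ℕ) : ℚ) = (K : ℚ) * ((K₂ : ℚ) - 1) := by
      push_cast [Nat.cast_sub (by omega : 1 ≤ K₂)]; ring
    linarith [hcast ▸ this]
  have hA3 : 3 < A := by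
    rw [hA]; nlinarith
  have hAK : A < (K : ℚ) := by
    rw [hA]
    have hKqK2 : (K₂ : ℚ) ^ 2 < (K : ℚ) := by
      have : K₂ * K₂ < K := by
        rw [hK]; exact Nat.mul_lt_mul_of_lt_of_le hgt (le_refl K₂) (by omega)
      have := (Nat.cast_lt (α := ℚ)).mpr this
      push_cast at this; nlinarith
    linarith
  have hinv : 1 / (K₁ : ℚ) < 1 := by
    rw [div_lt_one (by exact_mod_cast (by omega : (0:ℕ) < K₁))]
    exact_mod_cast (by omega : 1 < K₁)
  have hpos : A - 1 / (K₁ : ℚ) > 0 := by linarith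
  have hneg : A - (K : ℚ) < 0 := by linarith
  exact ⟨hpos, hneg, div_neg_of_neg_of_pos hneg hpos⟩
end

section
/- Let $K_1 \geq 2$, $K_2 \geq 2$, $K = K_1 K_2$, $A = K_2^2 - \frac{K(K_2-1)}{\binom{K}{K_2}}$, and $B = \frac{KK_1}{4}\cdot\frac{\binom{K}{K_2}-4}{\binom{K}{K_2}-KK_1}$. If $(K_1,K_2) \neq (2,2)$, then for every $\alpha \in (0,1)$, either $\alpha \leq \min\left(\frac{A-K}{A-1/K_1}, B\right)$ (Region I) or $\alpha > \frac{A-K}{A-1/K_1}$ (Region II); i.e., the case $B < \alpha \leq \frac{A-K}{A-1/K_1}$ (Region III) never occurs. -/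
lemma choose_le_choose_left {n r s : ℕ} (hrs : r ≤ s) (hs : s ≤ n / 2) :
    n.choose r ≤ n.choose s := by
  induction hrs with
  | refl => exact le_refl _
  | @step m h ih =>
      exact le_trans (ih (le_trans (Nat.le_succ m) hs))
        (Nat.choose_le_succ_of_lt_half_left (Nat.lt_of_succ_le hs))

lemma lem1 (K₁ K₂ : ℕ) (h1 : 2 ≤ K₁) (h2 : 2 ≤ K₂) (K : ℕ) (hK : K = K₁ * K₂) :
    K * (K₂ - 1) ≤ K.choose K₂ := by
  have h2K : 2 * K₂ ≤ K := by rw [hK]; nlinarith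
  have hhalf : K₂ ≤ K / 2 := Nat.le_div_iff_mul_le (by norm_num) |>.2 (by omega)
  calc K * (K₂ - 1) ≤ K.choose 2 := by
        rw [Nat.choose_two_right, Nat.le_div_iff_mul_le (by norm_num)]
        calc K * (K₂-1) * 2 = K * (2*(K₂-1)) := by ring
          _ ≤ K * (K - 1) := Nat.mul_le_mul_left K (by omega)
    _ ≤ K.choose K₂ := choose_le_choose_left h2 hhalf

lemma lem2 (K₁ K₂ : ℕ) (h1 : 2 ≤ K₁) (h2 : 3 ≤ K₂) (K : ℕ) (hK : K = K₁ * K₂) :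
    K * K₁ < K.choose K₂ := by
  have h3K : 3 * K₁ ≤ K := by rw [hK]; nlinarith
  have h6 : 6 ≤ K := by omega
  have hhalf : K₂ ≤ K / 2 := Nat.le_div_iff_mul_le (by norm_num) |>.2 (by rw [hK]; nlinarith)
  have step : K * K₁ < K.choose 3 := by
    have e2 : K.choose 2 * 2 = K.choose 1 * (K - 1) := Nat.choose_succ_right_eq K 1
    have e3 : K.choose 3 * 3 = K.choose 2 * (K - 2) := Nat.choose_succ_right_eq K 2
    rw [Nat.choose_one_right] at e2
    obtain ⟨m, rfl⟩ : ∃ m, K = m + 6 := ⟨K - 6, by omega⟩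
    have hm1 : m + 6 - 1 = m + 5 := by omega
    have hm2 : m + 6 - 2 = m + 4 := by omega
    rw [hm1] at e2
    rw [hm2] at e3
    nlinarith [e2, e3, h3K]
  exact lt_of_lt_of_le step (choose_le_choose_left h2 hhalf)

set_option maxHeartbeats 1600000 in
theorem stmt17 (K₁ K₂ : ℕ) (h1 : 2 ≤ K₁) (h2 : 2 ≤ K₂)
    (hne : (K₁, K₂) ≠ (2, 2))
    (K : ℕ) (hK : K = K₁ * K₂) (A B : ℚ)
    (hA : A = (K₂ : ℚ) ^ 2 - (K : ℚ) * ((K₂ : ℚ) - 1) / (K.choose K₂ : ℚ))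
    (hB : B = ((K : ℚ) * K₁ / 4) *
      (((K.choose K₂ : ℚ) - 4) / ((K.choose K₂ : ℚ) - (K : ℚ) * K₁)))
    (α : ℚ) (hα0 : 0 < α) (hα1 : α < 1) :
    α ≤ min ((A - K) / (A - 1 / K₁)) B ∨ α > (A - K) / (A - 1 / K₁) := by
  have hKK₂ : K₂ ≤ K := by rw [hK]; nlinarith
  have hCpos : 0 < K.choose K₂ := Nat.choose_pos hKK₂
  have hcpos : (0:ℚ) < (K.choose K₂ : ℚ) := by exact_mod_cast hCpos
  have hc1 : (K : ℚ) * ((K₂ : ℚ) - 1) ≤ (K.choose K₂ : ℚ) := by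
    have := lem1 K₁ K₂ h1 h2 K hK
    have h := (Nat.cast_le (α := ℚ)).2 this
    push_cast [Nat.cast_sub (by omega : 1 ≤ K₂)] at h
    convert h using 2
  have hK2Q : (2:ℚ) ≤ (K₂ : ℚ) := by exact_mod_cast h2
  have hK1Q : (2:ℚ) ≤ (K₁ : ℚ) := by exact_mod_cast h1
  have hA3 : (3:ℚ) ≤ A := by
    rw [hA]
    have hfrac : (K : ℚ) * ((K₂ : ℚ) - 1) / (K.choose K₂ : ℚ) ≤ 1 :=
      (div_le_one hcpos).2 hc1
    nlinarith
  have hden : 0 < A - 1 / (K₁ : ℚ) := by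
    have : 1 / (K₁ : ℚ) ≤ 1 := by
      rw [div_le_one (by linarith)]; linarith
    linarith
  have hAle : A ≤ (K₂ : ℚ)^2 := by
    rw [hA]
    have hnum : (0:ℚ) ≤ (K : ℚ) * ((K₂ : ℚ) - 1) := by
      have : (0:ℚ) ≤ (K : ℚ) := by positivity
      nlinarith
    have : (0:ℚ) ≤ (K : ℚ) * ((K₂ : ℚ) - 1) / (K.choose K₂ : ℚ) := by positivity
    linarith
  rcases le_or_gt K₁ K₂ with hcase | hcase
  · -- K₁ ≤ K₂ : then K₂ ≥ 3, B ≥ 1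
    have h3 : 3 ≤ K₂ := by
      rcases Nat.lt_or_ge K₂ 3 with h | h
      · exfalso; apply hne
        have : K₂ = 2 := by omega
        have : K₁ = 2 := by omega
        simp_all
      · exact h
    have hC : K * K₁ < K.choose K₂ := lem2 K₁ K₂ h1 h3 K hK
    have hCq : (K : ℚ) * (K₁ : ℚ) < (K.choose K₂ : ℚ) := by exact_mod_cast hC
    have hKQ : (6:ℚ) ≤ (K : ℚ) := by
      have : 6 ≤ K := by rw [hK]; nlinarith
      exact_mod_cast this
    have hkk : (12:ℚ) ≤ (K : ℚ) * (K₁ : ℚ) := by nlinarith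
    have hB1 : (1:ℚ) ≤ B := by
      rw [hB, div_mul_div_comm, le_div_iff₀ (by nlinarith)]
      nlinarith
    by_cases hx : α ≤ (A - K) / (A - 1 / K₁)
    · exact Or.inl (le_min hx (le_trans hα1.le hB1))
    · exact Or.inr (lt_of_not_ge hx)
  · -- K₂ < K₁ : X < 0 < α
    right
    have hnum : A - (K : ℚ) < 0 := by
      have h' : K₂ * K₂ < K := by
        rw [hK]
        exact Nat.mul_lt_mul_of_lt_of_le hcase (le_refl K₂) (by omega)
      have hKq : ((K₂ : ℚ))^2 < (K : ℚ) := by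
        have h'' : ((K₂ * K₂ : ℕ) : ℚ) < ((K : ℕ) : ℚ) := by exact_mod_cast h'
        push_cast at h''
        nlinarith [h'']
      linarith
    have : (A - K) / (A - 1 / K₁) < 0 := div_neg_of_neg_of_pos hnum hden
    linarith
end
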